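/- arXiv:math/0211448 — 5 statements merged into one kernel-verified Lean document; each statement's English description precedes it below -/
import Mathlib

section
/- Let b_k (k even, k ≥ 2) be a given sequence of reals, and define a_0 = 1 and a_k = (1/k) ∑_{2 ≤ m ≤ k, m even} a_{k−m} b_m for k even. Define c^n_k recursively by c^n_0 = 1 and c^n_k = c^{n−1}_k + ∑_{0 ≤ l ≤ k−2, l even} c^{n−1}_l ((n−l−1)!/(n−k)!) b_{k−l}. Then c^n_k = a_k · n!/(n−k)! for all n ≥ k. -/
open Finset
open scoped Nat

/-!
Writing `(n)_k = n!/(n-k)!` for the falling factorial, one proves `c^n_k = a_k (n)_k` for every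
even `k` by induction on `n`; for `k > n` both sides vanish. In the recursion for `c^n_k` the
induction hypothesis turns each `c^{n-1}_l (n-l-1)!/(n-k)!` into `a_l (n-1)_{k-1}`, and the
remaining sum `∑ a_l b_{k-l}` is `k a_k` by the recursion for `a`. What is left is the
Pascal-type identity `(n-1)_k + k (n-1)_{k-1} = (n)_k`.
-/

namespace Nat

theorem succ_descFactorial_succ_eq_add (m j : ℕ) :
    (m + 1).descFactorial (j + 1) = m.descFactorial (j + 1) + (j + 1) * m.descFactorial j := by
  rw [succ_descFactorial_succ, descFactorial_succ, ← Nat.add_mul]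
  rcases le_or_gt j m with hjm | hmj
  · congr 1
    omega
  · simp [descFactorial_of_lt hmj]

theorem cast_descFactorial_eq_div {K : Type*} [Field K] [CharZero K] {n k : ℕ} (hkn : k ≤ n) :
    (n.descFactorial k : K) = n ! / (n - k)! := by
  rw [eq_div_iff (mod_cast factorial_ne_zero _), ← factorial_mul_descFactorial hkn]
  push_cast
  ring

theorem cast_descFactorial_mul_factorial_div {K : Type*} [Field K] [CharZero K] {n l j : ℕ}
    (hlj : l ≤ j) (hjn : j ≤ n) :
    (n.descFactorial l : K) * ((n - l)! / (n - j)!) = n.descFactorial j := by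
  have : ((n - l)! : K) ≠ 0 := mod_cast factorial_ne_zero _
  rw [cast_descFactorial_eq_div (hlj.trans hjn), cast_descFactorial_eq_div hjn]
  field_simp

end Nat

theorem sum_filter_even_range_reflect {M : Type*} [AddCommMonoid M] (f : ℕ → ℕ → M) {k : ℕ}
    (hk : Even k) :
    ∑ l ∈ (range (k - 1)).filter (fun l => Even l), f l (k - l) =
      ∑ m ∈ (range (k + 1)).filter (fun m => Even m ∧ 2 ≤ m), f (k - m) m := by
  apply sum_nbij' (k - ·) (k - ·)
  · intro l hl
    simp only [mem_filter, mem_range] at hl ⊢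
    exact ⟨by omega, (Nat.even_sub (by omega)).2 (iff_of_true hk hl.2), by omega⟩
  · intro m hm
    simp only [mem_filter, mem_range] at hm ⊢
    exact ⟨by omega, (Nat.even_sub (by omega)).2 (iff_of_true hk hm.2.1)⟩
  · intro l hl
    simp only [mem_filter, mem_range] at hl
    omega
  · intro m hm
    simp only [mem_filter, mem_range] at hm
    omega
  · intro l hl
    simp only [mem_filter, mem_range] at hl
    rw [Nat.sub_sub_self (by omega)]

theorem sum_filter_even_convolution_eq_mul {a b : ℕ → ℝ}
    (haRec : ∀ k, Even k → 2 ≤ k →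
      a k = (1 / (k : ℝ)) *
        ∑ m ∈ (range (k + 1)).filter (fun m => Even m ∧ 2 ≤ m), a (k - m) * b m)
    {k : ℕ} (hk : Even k) (hk2 : 2 ≤ k) :
    ∑ l ∈ (range (k - 1)).filter (fun l => Even l), a l * b (k - l) = k * a k := by
  have : (k : ℝ) ≠ 0 := by positivity
  rw [sum_filter_even_range_reflect (fun l m => a l * b m) hk, haRec k hk hk2]
  field_simp

theorem gauge_coefficients_eq_mul_descFactorial {b a : ℕ → ℝ} {c : ℕ → ℕ → ℝ} (ha0 : a 0 = 1)
    (haRec : ∀ k, Even k → 2 ≤ k →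
      a k = (1 / (k : ℝ)) *
        ∑ m ∈ (range (k + 1)).filter (fun m => Even m ∧ 2 ≤ m), a (k - m) * b m)
    (hc0 : ∀ n, c n 0 = 1)
    (hcTop : ∀ n k, n < k → c n k = 0)
    (hcRec : ∀ n k, Even k → 2 ≤ k → k ≤ n →
      c n k = c (n - 1) k +
        ∑ l ∈ (range (k - 1)).filter (fun l => Even l),
          c (n - 1) l * (((n - l - 1).factorial : ℝ) / ((n - k).factorial : ℝ)) * b (k - l))
    (n : ℕ) {k : ℕ} (hk : Even k) :
    c n k = a k * n.descFactorial k := by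
  induction n generalizing k with
  | zero =>
    obtain rfl | hk0 := k.eq_zero_or_pos
    · simp [hc0, ha0]
    · simp [hcTop 0 k hk0, Nat.descFactorial_of_lt hk0]
  | succ n ih =>
    obtain rfl | hk2 : k = 0 ∨ 2 ≤ k := by
      obtain ⟨r, rfl⟩ := hk
      omega
    · simp [hc0, ha0]
    obtain hnk | hkn := lt_or_ge (n + 1) k
    · simp [hcTop _ _ hnk, Nat.descFactorial_of_lt hnk]
    have hsum : ∑ l ∈ (range (k - 1)).filter (fun l => Even l),
        c n l * (((n + 1 - l - 1)! : ℝ) / (n + 1 - k)!) * b (k - l) =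
          n.descFactorial (k - 1) * (k * a k) := by
      rw [← sum_filter_even_convolution_eq_mul haRec hk hk2, mul_sum]
      refine sum_congr rfl fun l hl => ?_
      rw [mem_filter, mem_range] at hl
      rw [ih hl.2, show n + 1 - l - 1 = n - l by omega, show n + 1 - k = n - (k - 1) by omega,
        ← Nat.cast_descFactorial_mul_factorial_div (K := ℝ) (by omega : l ≤ k - 1) (by omega)]
      ring
    obtain ⟨j, rfl⟩ : ∃ j, k = j + 1 := ⟨k - 1, by omega⟩
    rw [hcRec (n + 1) (j + 1) hk hk2 hkn, Nat.add_sub_cancel, ih hk, hsum,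
      Nat.add_sub_cancel, Nat.succ_descFactorial_succ_eq_add]
    push_cast
    ring

/-- Let `b_k` (k even, `k ≥ 2`) be a sequence of reals, and define
`a_0 = 1`, `a_k = (1/k) ∑_{2 ≤ m ≤ k, m even} a_{k−m} b_m` for even `k ≥ 2`.
Define `c^n_k` by `c^n_0 = 1`, `c^n_k = 0` for `k > n`, and for even `2 ≤ k ≤ n`
`c^n_k = c^{n−1}_k + ∑_{0 ≤ l ≤ k−2, l even} c^{n−1}_l ((n−l−1)!/(n−k)!) b_{k−l}`.
Then `c^n_k = a_k · n!/(n−k)!` for all even `k ≤ n`. -/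
theorem gauge_coefficients_eq
    (b a : ℕ → ℝ) (c : ℕ → ℕ → ℝ)
    (ha0 : a 0 = 1)
    (haRec : ∀ k, Even k → 2 ≤ k →
      a k = (1 / (k : ℝ)) *
        ∑ m ∈ (range (k + 1)).filter (fun m => Even m ∧ 2 ≤ m), a (k - m) * b m)
    (hc0 : ∀ n, c n 0 = 1)
    (hcTop : ∀ n k, n < k → c n k = 0)
    (hcRec : ∀ n k, Even k → 2 ≤ k → k ≤ n →
      c n k = c (n - 1) k +
        ∑ l ∈ (range (k - 1)).filter (fun l => Even l),
          c (n - 1) l * (((n - l - 1).factorial : ℝ) / ((n - k).factorial : ℝ)) * b (k - l))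
    (n k : ℕ) (hk : Even k) (hkn : k ≤ n) :
    c n k = a k * ((n.factorial : ℝ) / ((n - k).factorial : ℝ)) := by
  rw [gauge_coefficients_eq_mul_descFactorial ha0 haRec hc0 hcTop hcRec n hk,
    Nat.cast_descFactorial_eq_div hkn]
end

section
/- Let D = ∑_{m even} a_m ε^m ∂₁^m act on polynomials in x₁ over ℝ[[ε]], with a_0 = 1. If a star product satisfies x₁^{n−1} * x₁ = x₁^n + ∑_{2≤k≤n, k even} ε^k ((n−1)!/(n−k)!) b_k x₁^{n−k}, and the a_m satisfy a_k = (1/k)∑_{2≤m≤k, m even} a_{k−m} b_m, then the gauge-transformed product f *_{new} g := D⁻¹(Df * Dg) satisfies x₁^{*_{new} n} = x₁^n for all n. -/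
/-!
Write `ε∂` for `ε ∂₁`. On polynomials of degree `< N`, `D` acts as `σ(ε∂)`, where
`σ(T) = ∑_{m even} a_m T^m` (`dSymbol a`) is truncated at degree `N`, and the hypothesis on the
star product says `p * x₁ = x₁ p + ε β(ε∂) p` with `β(T) = ∑_{k even} b_k T^(k-1)`
(`starSymbol b`). Since `[σ(ε∂), x₁] = ε σ'(ε∂)`, the identity `D p * x₁ = D (x₁ p)` reduces to
the power series equation `σ' = β σ`, which is the recursion for the `a_k`. Hence
`D x₁^n * x₁ = D x₁^(n+1)`, and the new star powers of `x₁` are the ordinary ones by induction.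
-/

open Finset Polynomial

/-- The coefficient ring `ℝ[ε]`. -/
abbrev Rε : Type := Polynomial ℝ

/-- The algebra `ℝ[ε][x₁]` of polynomials in `x₁` with coefficients in `ℝ[ε]`
(the relevant part of `ℝ[x₁][[ε]]` for star powers of `x₁`). -/
abbrev Aε : Type := Polynomial Rε

/-- The element `ε` of `Aε`. -/
noncomputable def epsA : Aε := Polynomial.C Polynomial.X

/-- The formal differential operator `D = ∑_{m even} a_m ε^m ∂₁^m` acting on
polynomials in `x₁` (the sum is finite on each polynomial). -/
noncomputable def Dop (a : ℕ → ℝ) (p : Aε) : Aε :=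
  ∑ m ∈ range (p.natDegree + 1),
    if Even m then a m • (epsA ^ m * (Polynomial.derivative^[m] p)) else 0

/-- The `n`-fold power of `x₁` for the gauge transformed product
`f *_{new} g = D⁻¹(Df * Dg)`, where `E = D⁻¹`; powers are iterated on the right,
`x₁^{*_{new}(n+1)} = x₁^{*_{new} n} *_{new} x₁`. -/
noncomputable def newPow (star : Aε →ₗ[Rε] Aε →ₗ[Rε] Aε) (E : Aε → Aε) (a : ℕ → ℝ) :
    ℕ → Aε
  | 0 => 1
  | n + 1 => E (star (Dop a (newPow star E a n)) (Dop a Polynomial.X))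

section ScaledDerivative

variable {K R : Type*} [CommRing K] [CommRing R] [Algebra K R] (c : R)

noncomputable def scaledDeriv : Module.End R R[X] := c • derivative

lemma scaledDeriv_pow_apply (m : ℕ) (p : R[X]) :
    (scaledDeriv c ^ m) p = C c ^ m * derivative^[m] p := by
  induction m with
  | zero => simp
  | succ m ih =>
    rw [pow_succ', Module.End.mul_apply, ih, scaledDeriv, LinearMap.smul_apply, smul_eq_C_mul,
      ← C_pow, derivative_C_mul, Function.iterate_succ_apply', C_pow]
    ring

lemma scaledDeriv_pow_apply_eq_zero {m : ℕ} {p : R[X]} (h : p.natDegree < m) :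
    (scaledDeriv c ^ m) p = 0 := by
  rw [scaledDeriv_pow_apply, iterate_derivative_eq_zero h, mul_zero]

lemma scaledDeriv_apply_X_mul (p : R[X]) :
    scaledDeriv c (X * p) = X * scaledDeriv c p + C c * p := by
  simp only [scaledDeriv, LinearMap.smul_apply, derivative_mul, derivative_X, one_mul,
    smul_eq_C_mul]
  ring

lemma scaledDeriv_pow_succ_apply_X_mul (n : ℕ) (p : R[X]) :
    (scaledDeriv c ^ (n + 1)) (X * p) =
      X * (scaledDeriv c ^ (n + 1)) p + (n + 1 : ℕ) • (C c * (scaledDeriv c ^ n) p) := by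
  induction n generalizing p with
  | zero => simp [scaledDeriv_apply_X_mul]
  | succ n ih =>
    rw [pow_succ, Module.End.mul_apply, scaledDeriv_apply_X_mul, map_add, ih,
      ← smul_eq_C_mul (p := p) c, map_smul, ← Module.End.mul_apply, ← Module.End.mul_apply,
      ← pow_succ, ← pow_succ]
    simp only [← smul_eq_C_mul]
    module

lemma aeval_scaledDeriv_apply_congr {N : ℕ} {P Q : K[X]} (hPQ : ∀ i < N, P.coeff i = Q.coeff i)
    {p : R[X]} (hp : p.natDegree < N) :
    aeval (scaledDeriv c) P p = aeval (scaledDeriv c) Q p := by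
  obtain ⟨S, hS⟩ : X ^ N ∣ P - Q := X_pow_dvd_iff.2 fun i hi => by
    rw [coeff_sub, hPQ i hi, sub_self]
  rw [← sub_eq_zero, ← LinearMap.sub_apply, ← map_sub (aeval (R := K) (scaledDeriv c)), hS,
    mul_comm, map_mul, map_pow, aeval_X, Module.End.mul_apply, scaledDeriv_pow_apply_eq_zero c hp,
    map_zero]

lemma natDegree_aeval_scaledDeriv_apply_le (P : K[X]) (p : R[X]) :
    (aeval (scaledDeriv c) P p).natDegree ≤ p.natDegree := by
  rw [aeval_eq_sum_range, LinearMap.sum_apply]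
  refine natDegree_sum_le_of_forall_le _ _ fun i _ => ?_
  rw [LinearMap.smul_apply, scaledDeriv_pow_apply, ← C_pow]
  exact (natDegree_smul_le _ _).trans <| (natDegree_C_mul_le _ _).trans <|
    (natDegree_iterate_derivative p i).trans (Nat.sub_le _ _)

lemma aeval_scaledDeriv_apply_X_mul (P : K[X]) (p : R[X]) :
    aeval (scaledDeriv c) P (X * p) =
      X * aeval (scaledDeriv c) P p + C c * aeval (scaledDeriv c) (derivative P) p := by
  induction P using Polynomial.induction_on' with
  | add P Q hP hQ => simp only [map_add, LinearMap.add_apply, hP, hQ]; ring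
  | monomial n k =>
    rcases n with _ | n
    · simp [Module.algebraMap_end_apply]
    · simp only [aeval_monomial, derivative_monomial, Module.End.mul_apply,
        scaledDeriv_pow_succ_apply_X_mul, Module.algebraMap_end_apply, Nat.add_sub_cancel,
        smul_add, mul_smul_comm, mul_smul, Nat.cast_smul_eq_nsmul]

end ScaledDerivative

noncomputable abbrev epsDeriv : Module.End Rε Aε := scaledDeriv X

noncomputable def dSymbol (a : ℕ → ℝ) : PowerSeries ℝ :=
  PowerSeries.mk fun m => if Even m then a m else 0

lemma Dop_eq_aeval_trunc (a : ℕ → ℝ) {N : ℕ} {p : Aε} (hp : p.natDegree < N) :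
    Dop a p = aeval epsDeriv (PowerSeries.trunc N (dSymbol a)) p := by
  have hcoeff : ∀ i < p.natDegree + 1, (PowerSeries.trunc N (dSymbol a)).coeff i =
      (PowerSeries.trunc (p.natDegree + 1) (dSymbol a)).coeff i := fun i hi => by
    rw [PowerSeries.coeff_trunc, PowerSeries.coeff_trunc, if_pos hi, if_pos (by omega)]
  rw [aeval_scaledDeriv_apply_congr _ hcoeff (Nat.lt_succ_self _),
    aeval_eq_sum_range' (PowerSeries.natDegree_trunc_lt _ _), LinearMap.sum_apply, Dop]
  refine Finset.sum_congr rfl fun m hm => ?_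
  rw [LinearMap.smul_apply, scaledDeriv_pow_apply, PowerSeries.coeff_trunc,
    if_pos (Finset.mem_range.1 hm), dSymbol, PowerSeries.coeff_mk]
  split_ifs <;> simp [epsA]

lemma Dop_X (a : ℕ → ℝ) (ha0 : a 0 = 1) : Dop a (X : Aε) = X := by
  simp [Dop, Finset.sum_range_succ, ha0]

lemma Nat.cast_factorial_div_factorial_sub {K : Type*} [Field K] [CharZero K] {n k : ℕ}
    (hk : k ≤ n) : (n.factorial : K) / (n - k).factorial = n.descFactorial k := by
  rw [div_eq_iff (Nat.cast_ne_zero.2 (Nat.factorial_ne_zero _)), mul_comm]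
  exact_mod_cast (Nat.factorial_mul_descFactorial hk).symm

noncomputable def starSymbol (b : ℕ → ℝ) : PowerSeries ℝ :=
  PowerSeries.mk fun k => if Even (k + 1) then b (k + 1) else 0

def StarXPowFormula (star : Aε →ₗ[Rε] Aε →ₗ[Rε] Aε) (b : ℕ → ℝ) : Prop :=
  ∀ n : ℕ, 1 ≤ n →
    star (X ^ (n - 1)) X
      = X ^ n +
        ∑ k ∈ (range (n + 1)).filter (fun k => Even k ∧ 2 ≤ k),
          ((((n - 1).factorial : ℝ) / ((n - k).factorial : ℝ)) * b k) •
            (epsA ^ k * X ^ (n - k))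

section StarProduct

variable {star : Aε →ₗ[Rε] Aε →ₗ[Rε] Aε} {b : ℕ → ℝ}

lemma star_X_pow_X (hstar : StarXPowFormula star b) {N n : ℕ} (hn : n < N) :
    star (X ^ n) X =
      X ^ (n + 1) + epsA * aeval epsDeriv (PowerSeries.trunc N (starSymbol b)) (X ^ n) := by
  have hcoeff : ∀ i < n + 1, (PowerSeries.trunc N (starSymbol b)).coeff i =
      (PowerSeries.trunc (n + 1) (starSymbol b)).coeff i := fun i hi => by
    rw [PowerSeries.coeff_trunc, PowerSeries.coeff_trunc, if_pos hi, if_pos (by omega)]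
  have h := hstar (n + 1) (by omega)
  rw [Nat.add_sub_cancel] at h
  rw [aeval_scaledDeriv_apply_congr _ hcoeff (by rw [natDegree_X_pow]; omega),
    aeval_eq_sum_range' (PowerSeries.natDegree_trunc_lt _ _), LinearMap.sum_apply, mul_sum,
    h, sum_filter, sum_range_succ', if_neg (by omega), add_zero]
  congr 1
  refine Finset.sum_congr rfl fun i hi => ?_
  have hi : i ≤ n := Nat.lt_succ_iff.1 (Finset.mem_range.1 hi)
  rw [LinearMap.smul_apply, scaledDeriv_pow_apply, iterate_derivative_X_pow_eq_smul,
    PowerSeries.coeff_trunc, if_pos (Nat.lt_succ_of_le hi), starSymbol, PowerSeries.coeff_mk,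
    Nat.add_sub_add_right, Nat.cast_factorial_div_factorial_sub hi]
  by_cases hev : Even (i + 1)
  · have h2 : 2 ≤ i + 1 := by obtain ⟨r, hr⟩ := hev; omega
    rw [if_pos ⟨hev, h2⟩, if_pos hev, mul_smul, Nat.cast_smul_eq_nsmul, Nat.cast_smul_eq_nsmul,
      pow_succ', mul_assoc, mul_smul_comm, mul_smul_comm, smul_comm, mul_smul_comm]
    rfl
  · rw [if_neg (fun h => hev h.1), if_neg hev, zero_smul, mul_zero]

lemma star_apply_X (hstar : StarXPowFormula star b) {N : ℕ} {p : Aε} (hp : p.natDegree < N) :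
    star p X = X * p + epsA * aeval epsDeriv (PowerSeries.trunc N (starSymbol b)) p := by
  have hsum := p.as_sum_range' N hp
  simp_rw [← smul_X_eq_monomial] at hsum
  rw [hsum]
  simp only [map_sum, LinearMap.sum_apply, map_smul, LinearMap.smul_apply, mul_sum, mul_smul_comm,
    ← sum_add_distrib]
  refine sum_congr rfl fun i hi => ?_
  rw [star_X_pow_X hstar (mem_range.1 hi), smul_add, pow_succ']

end StarProduct

def CoeffRecursion (a b : ℕ → ℝ) : Prop :=
  ∀ k, Even k → 2 ≤ k →
    a k = (1 / (k : ℝ)) *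
      ∑ m ∈ (range (k + 1)).filter (fun m => Even m ∧ 2 ≤ m), a (k - m) * b m

lemma derivative_dSymbol {a b : ℕ → ℝ} (haRec : CoeffRecursion a b) :
    PowerSeries.derivative ℝ (dSymbol a) = starSymbol b * dSymbol a := by
  ext j
  rw [PowerSeries.coeff_derivative, PowerSeries.coeff_mul,
    Finset.Nat.sum_antidiagonal_eq_sum_range_succ_mk]
  simp only [dSymbol, starSymbol, PowerSeries.coeff_mk]
  have hparity : ∀ k ∈ range (j + 1), Even (j + 1) ↔ (Even (k + 1) ↔ Even (j - k)) :=
    fun k hk => by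
      rw [← Nat.even_add, show k + 1 + (j - k) = j + 1 by have := mem_range.1 hk; omega]
  by_cases hj : Even (j + 1)
  · have hj2 : 2 ≤ j + 1 := by obtain ⟨r, hr⟩ := hj; omega
    rw [if_pos hj, haRec (j + 1) hj hj2, sum_filter, sum_range_succ', if_neg (by omega), add_zero,
      one_div, Nat.cast_succ, mul_right_comm, inv_mul_cancel₀ (by positivity), one_mul]
    refine sum_congr rfl fun k hk => ?_
    have hk2 : Even (k + 1) → 2 ≤ k + 1 := fun ⟨r, hr⟩ => by omega
    rw [Nat.add_sub_add_right]
    by_cases hk' : Even (k + 1)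
    · rw [if_pos ⟨hk', hk2 hk'⟩, if_pos hk', if_pos (((hparity k hk).1 hj).1 hk'), mul_comm]
    · rw [if_neg (fun h => hk' h.1), if_neg hk', zero_mul]
  · rw [if_neg hj, zero_mul]
    refine (sum_eq_zero fun k hk => ?_).symm
    by_cases hk' : Even (k + 1)
    · rw [if_neg fun h => hj ((hparity k hk).2 (iff_of_true hk' h)), mul_zero]
    · rw [if_neg hk', zero_mul]

lemma star_Dop_X {star : Aε →ₗ[Rε] Aε →ₗ[Rε] Aε} {a b : ℕ → ℝ}
    (haRec : CoeffRecursion a b) (hstar : StarXPowFormula star b) (p : Aε) :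
    star (Dop a p) X = Dop a (X * p) := by
  set N := p.natDegree + 1
  set tA := PowerSeries.trunc (N + 1) (dSymbol a)
  have hD : Dop a p = aeval epsDeriv tA p := Dop_eq_aeval_trunc a (by omega)
  have hdeg : (Dop a p).natDegree < N + 1 :=
    hD ▸ (natDegree_aeval_scaledDeriv_apply_le _ _ _).trans_lt (by omega)
  have hsymbol : aeval epsDeriv (PowerSeries.trunc (N + 1) (starSymbol b) * tA) p =
      aeval epsDeriv (derivative tA) p := by
    refine aeval_scaledDeriv_apply_congr _ (fun i hi => ?_) (Nat.lt_succ_self _)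
    rw [← PowerSeries.trunc_derivative, PowerSeries.coeff_trunc, if_pos hi,
      derivative_dSymbol haRec,
      PowerSeries.coeff_mul_eq_coeff_trunc_mul_trunc _ _ (Nat.lt_succ_of_lt hi),
      ← Polynomial.coe_mul, Polynomial.coeff_coe]
  have hXp : (X * p).natDegree < N + 1 := natDegree_mul_le.trans_lt (by rw [natDegree_X]; omega)
  rw [Dop_eq_aeval_trunc a hXp, aeval_scaledDeriv_apply_X_mul, star_apply_X hstar hdeg, hD,
    ← Module.End.mul_apply, ← map_mul, hsymbol]
  rfl

theorem gauge_transformed_power_trivial_general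
    (star : Aε →ₗ[Rε] Aε →ₗ[Rε] Aε) (E : Aε → Aε) (a b : ℕ → ℝ)
    (hED : ∀ p, E (Dop a p) = p)
    (ha0 : a 0 = 1)
    (haRec : ∀ k, Even k → 2 ≤ k →
      a k = (1 / (k : ℝ)) *
        ∑ m ∈ (range (k + 1)).filter (fun m => Even m ∧ 2 ≤ m), a (k - m) * b m)
    (hstar : ∀ n : ℕ, 1 ≤ n →
      star (Polynomial.X ^ (n - 1)) Polynomial.X
        = Polynomial.X ^ n +
          ∑ k ∈ (range (n + 1)).filter (fun k => Even k ∧ 2 ≤ k),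
            ((((n - 1).factorial : ℝ) / ((n - k).factorial : ℝ)) * b k) •
              (epsA ^ k * Polynomial.X ^ (n - k))) :
    ∀ n : ℕ, newPow star E a n = Polynomial.X ^ n := by
  intro n
  induction n with
  | zero => rfl
  | succ n ih => rw [newPow, ih, Dop_X a ha0, star_Dop_X haRec hstar, hED, pow_succ']

/-- Let `D = ∑_{m even} a_m ε^m ∂₁^m` with `a_0 = 1` and `E = D⁻¹`.
If the star product satisfies
`x₁^{n−1} * x₁ = x₁^n + ∑_{2≤k≤n even} ε^k ((n−1)!/(n−k)!) b_k x₁^{n−k}`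
and the `a_m` satisfy `a_k = (1/k) ∑_{2≤m≤k even} a_{k−m} b_m`, then the gauge
transformed product `f *_{new} g := D⁻¹(Df * Dg)` satisfies `x₁^{*_{new} n} = x₁^n`. -/
theorem gauge_transformed_power_trivial
    (star : Aε →ₗ[Rε] Aε →ₗ[Rε] Aε) (E : Aε → Aε) (a b : ℕ → ℝ)
    (hED : ∀ p, E (Dop a p) = p) (hDE : ∀ p, Dop a (E p) = p)
    (ha0 : a 0 = 1)
    (haRec : ∀ k, Even k → 2 ≤ k →
      a k = (1 / (k : ℝ)) *
        ∑ m ∈ (range (k + 1)).filter (fun m => Even m ∧ 2 ≤ m), a (k - m) * b m)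
    (hstar : ∀ n : ℕ, 1 ≤ n →
      star (Polynomial.X ^ (n - 1)) Polynomial.X
        = Polynomial.X ^ n +
          ∑ k ∈ (range (n + 1)).filter (fun k => Even k ∧ 2 ≤ k),
            ((((n - 1).factorial : ℝ) / ((n - k).factorial : ℝ)) * b k) •
              (epsA ^ k * Polynomial.X ^ (n - k))) :
    ∀ n : ℕ, newPow star E a n = Polynomial.X ^ n :=
  gauge_transformed_power_trivial_general star E a b hED ha0 haRec hstar
end

section
/- In the algebra 𝓕 = ℝ⟨x₁, x₂, x₃, e^{±x₁}⟩[[ε]]/I_ε, where I_ε is generated by the relations [x₁,x₂] = 2εx₂, [x₁,x₃] = −2εx₃, [x₂,x₃] = 2εA(ε²)sinh(2x₁), e^{±x₁}x₂ = e^{±2ε}x₂e^{±x₁}, e^{±x₁}x₃ = e^{∓2ε}x₃e^{±x₁}, [x₁, e^{±x₁}] = 0, e^{x₁}e^{-x₁} = 1, the set {x₁^{n₁} x₂^{n₂} x₃^{n₃} e^{m x₁} : n_i ∈ ℕ, m ∈ ℤ} spans 𝓕 (every word in the generators can be rewritten as a linear combination of such ordered monomials). -/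
open PowerSeries

noncomputable section

/-- The coefficient ring `R = ℝ[[ε]]`. -/
abbrev Rpow : Type := PowerSeries ℝ

/-- The free associative algebra `𝓕̃ = ℝ⟨x₁,x₂,x₃,e^{x₁},e^{−x₁}⟩[[ε]]` on five
generators (`3` and `4` standing for `e^{x₁}` and `e^{−x₁}`). -/
abbrev FreeF : Type := FreeAlgebra Rpow (Fin 5)

/-- The generator `x₁`. -/
def gx₁ : FreeF := FreeAlgebra.ι Rpow 0
/-- The generator `x₂`. -/
def gx₂ : FreeF := FreeAlgebra.ι Rpow 1
/-- The generator `x₃`. -/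
def gx₃ : FreeF := FreeAlgebra.ι Rpow 2
/-- The generator `e^{x₁}`. -/
def gEp : FreeF := FreeAlgebra.ι Rpow 3
/-- The generator `e^{−x₁}`. -/
def gEm : FreeF := FreeAlgebra.ι Rpow 4

/-- The scalar `ε ∈ ℝ[[ε]]`. -/
def εs : Rpow := PowerSeries.X

/-- The scalar `e^{2ε} ∈ ℝ[[ε]]`. -/
def e2ε : Rpow := PowerSeries.rescale 2 (PowerSeries.exp ℝ)

/-- The scalar `e^{−2ε} ∈ ℝ[[ε]]`. -/
def em2ε : Rpow := PowerSeries.rescale (-2) (PowerSeries.exp ℝ)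

/-- The relations defining the ideal `I_ε` (with `A` the fixed power series `A(ε²)`):
`[x₁,x₂] = 2εx₂`, `[x₁,x₃] = −2εx₃`, `[x₂,x₃] = 2εA(ε²) sinh(2x₁)` (with
`sinh(2x₁) = ((e^{x₁})² − (e^{−x₁})²)/2`), `e^{±x₁}x₂ = e^{±2ε}x₂e^{±x₁}`,
`e^{±x₁}x₃ = e^{∓2ε}x₃e^{±x₁}`, `[x₁,e^{±x₁}] = 0`, `e^{x₁}e^{−x₁} = 1 = e^{−x₁}e^{x₁}`. -/
inductive FRel (A : Rpow) : FreeF → FreeF → Prop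
  | comm12 : FRel A (gx₁ * gx₂ - gx₂ * gx₁) ((2 * εs) • gx₂)
  | comm13 : FRel A (gx₁ * gx₃ - gx₃ * gx₁) (-((2 * εs) • gx₃))
  | comm23 : FRel A (gx₂ * gx₃ - gx₃ * gx₂) ((εs * A) • (gEp ^ 2 - gEm ^ 2))
  | ep2 : FRel A (gEp * gx₂) (e2ε • (gx₂ * gEp))
  | em2 : FRel A (gEm * gx₂) (em2ε • (gx₂ * gEm))
  | ep3 : FRel A (gEp * gx₃) (em2ε • (gx₃ * gEp))
  | em3 : FRel A (gEm * gx₃) (e2ε • (gx₃ * gEm))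
  | commEp : FRel A (gx₁ * gEp) (gEp * gx₁)
  | commEm : FRel A (gx₁ * gEm) (gEm * gx₁)
  | epem : FRel A (gEp * gEm) 1
  | emep : FRel A (gEm * gEp) 1

/-- The quotient algebra `𝓕 = 𝓕̃ / I_ε`. -/
abbrev Falg (A : Rpow) : Type := RingQuot (FRel A)

/-- The quotient map `𝓕̃ → 𝓕`. -/
def πF (A : Rpow) : FreeF →ₐ[Rpow] Falg A := RingQuot.mkAlgHom Rpow (FRel A)

/-- `e^{m x₁}` for `m : ℤ`, read as `(e^{x₁})^m` for `m ≥ 0` and `(e^{−x₁})^{−m}`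
for `m < 0`. -/
def epow (m : ℤ) : FreeF := if 0 ≤ m then gEp ^ m.toNat else gEm ^ (-m).toNat

/-!
Let `S` be the span of the ordered monomials. Since `1 ∈ S` and the generators generate `𝓕`,
it suffices that `S` is stable under right multiplication by each generator. Multiplying by
`e^{±x₁}` only shifts `m`. A right factor `x₃` or `x₂` is first moved past `e^{m x₁}`, which
costs only a scalar because conjugation by `e^{x₁}` rescales `x₂` and `x₃`; `x₂` then has to pass
`x₃^c`, and each commutator `[x₂, x₃] = 2εA sinh(2x₁)` it creates is pushed to the right end,
where it merges into `e^{(m ± 2) x₁}`. A right factor `x₁` commutes with `e^{m x₁}` and passes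
`x₃^c` and `x₂^b` at the cost of lower terms, as `x₂` and `x₃` are eigenvectors of `ad x₁`.
-/

open Submodule

section SkewCommutation

variable {R B : Type*} [CommSemiring R] [Semiring B] [Algebra R B] {g x : B} {s t : R}

theorem pow_mul_eq_smul_mul_pow (h : g * x = s • (x * g)) (k : ℕ) :
    g ^ k * x = s ^ k • (x * g ^ k) := by
  induction k with
  | zero => simp
  | succ k ih =>
    rw [pow_succ', mul_assoc, ih, mul_smul_comm, ← mul_assoc, h, smul_mul_assoc, smul_smul,
      mul_assoc, ← pow_succ', pow_succ, pow_succ s k]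

theorem mul_pow_eq_smul_pow_mul (h : g * x = s • (x * g)) (k : ℕ) :
    g * x ^ k = s ^ k • (x ^ k * g) := by
  rw [← smul_mul_assoc, ← smul_pow]
  exact SemiconjBy.pow_right (by rwa [SemiconjBy, smul_mul_assoc]) k

theorem Units.exists_zpow_mul_eq_smul_mul_zpow {u : Bˣ} (h : ↑u * x = s • (x * ↑u))
    (h' : ↑u⁻¹ * x = t • (x * ↑u⁻¹)) (m : ℤ) : ∃ r : R, ↑(u ^ m) * x = r • (x * ↑(u ^ m)) := by
  cases m with
  | ofNat n => exact ⟨s ^ n, pow_mul_eq_smul_mul_pow h n⟩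
  | negSucc n =>
    refine ⟨t ^ (n + 1), ?_⟩
    rw [zpow_negSucc, ← inv_pow]
    exact pow_mul_eq_smul_mul_pow h' (n + 1)

end SkewCommutation

theorem FreeAlgebra.span_eq_top_of_mul_ι_mem {R X B : Type*} [CommSemiring R] [Semiring B]
    [Algebra R B] (f : FreeAlgebra R X →ₐ[R] B) (hf : Function.Surjective f) {s : Set B}
    (one_mem : (1 : B) ∈ span R s) (mul_ι_mem : ∀ y ∈ s, ∀ i, y * f (ι R i) ∈ span R s) :
    span R s = ⊤ := by
  have mul_mem : ∀ w, ∀ y ∈ span R s, y * f w ∈ span R s := by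
    intro w
    induction w using FreeAlgebra.induction with
    | grade0 r =>
      intro y hy
      rw [AlgHom.commutes, ← Algebra.commutes, ← Algebra.smul_def]
      exact smul_mem _ r hy
    | grade1 i =>
      have : span R s ≤ (span R s).comap (LinearMap.mulRight R (f (ι R i))) :=
        span_le.mpr fun y hy ↦ mul_ι_mem y hy i
      exact this
    | mul a b ha hb =>
      intro y hy
      rw [map_mul, ← mul_assoc]
      exact hb _ (ha y hy)
    | add a b ha hb =>
      intro y hy
      rw [map_add, mul_add]
      exact add_mem (ha y hy) (hb y hy)
  refine eq_top_iff.mpr fun z _ ↦ ?_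
  obtain ⟨w, rfl⟩ := hf z
  simpa using mul_mem w 1 one_mem

section Commutators

variable {R B : Type*} [CommRing R] [Ring B] [Algebra R B] {x g : B} {t : R}

theorem lie_pow_eq_smul_pow (h : ⁅x, g⁆ = t • g) (k : ℕ) : ⁅x, g ^ k⁆ = (k * t) • g ^ k := by
  induction k with
  | zero => simp [Ring.lie_def]
  | succ k ih =>
    calc ⁅x, g ^ (k + 1)⁆ = ⁅x, g ^ k⁆ * g + g ^ k * ⁅x, g⁆ := by
          simp only [Ring.lie_def, pow_succ, mul_sub, sub_mul, mul_assoc]; abel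
      _ = ((k + 1 : ℕ) * t) • g ^ (k + 1) := by
          rw [ih, h, smul_mul_assoc, mul_smul_comm, ← pow_succ, ← add_smul,
            Nat.cast_succ, add_one_mul]

theorem pow_mul_eq_mul_pow_sub_smul (h : ⁅x, g⁆ = t • g) (k : ℕ) :
    g ^ k * x = x * g ^ k - (k * t) • g ^ k := by
  rw [← lie_pow_eq_smul_pow h, Ring.lie_def, sub_sub_cancel]

end Commutators

section OrderedMonomials

variable {R B : Type*} [CommRing R] [Ring B] [Algebra R B] (x₁ x₂ x₃ : B) (e : Bˣ)

def orderedMonomial (a b c : ℕ) (m : ℤ) : B := x₁ ^ a * x₂ ^ b * x₃ ^ c * ↑(e ^ m)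

def orderedMonomials : Set B := {y | ∃ (a b c : ℕ) (m : ℤ), y = orderedMonomial x₁ x₂ x₃ e a b c m}

variable {x₁ x₂ x₃ e}

theorem orderedMonomial_mem_span (a b c : ℕ) (m : ℤ) :
    orderedMonomial x₁ x₂ x₃ e a b c m ∈ span R (orderedMonomials x₁ x₂ x₃ e) :=
  subset_span ⟨a, b, c, m, rfl⟩

theorem one_mem_span_orderedMonomials : (1 : B) ∈ span R (orderedMonomials x₁ x₂ x₃ e) :=
  subset_span ⟨0, 0, 0, 0, by simp [orderedMonomial]⟩

theorem orderedMonomial_mul_units_zpow (a b c : ℕ) (m k : ℤ) :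
    orderedMonomial x₁ x₂ x₃ e a b c m * ↑(e ^ k) = orderedMonomial x₁ x₂ x₃ e a b c (m + k) := by
  rw [orderedMonomial, orderedMonomial, mul_assoc, ← Units.val_mul, ← zpow_add]

theorem orderedMonomial_mul_x₁ {s t : R} (h₁₂ : ⁅x₁, x₂⁆ = s • x₂) (h₁₃ : ⁅x₁, x₃⁆ = t • x₃)
    (he₁ : Commute (↑e : B) x₁) (a b c : ℕ) (m : ℤ) :
    orderedMonomial x₁ x₂ x₃ e a b c m * x₁ = orderedMonomial x₁ x₂ x₃ e (a + 1) b c m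
      - (b * s + c * t) • orderedMonomial x₁ x₂ x₃ e a b c m := by
  have he : ↑(e ^ m) * x₁ = x₁ * ↑(e ^ m) := (he₁.units_zpow_left m).eq
  simp only [orderedMonomial, mul_assoc, he]
  simp only [← mul_assoc (x₃ ^ c), pow_mul_eq_mul_pow_sub_smul h₁₃]
  simp only [← mul_assoc (x₂ ^ b), sub_mul, mul_sub, pow_mul_eq_mul_pow_sub_smul h₁₂]
  simp only [pow_succ, mul_assoc, smul_mul_assoc, mul_smul_comm]
  module

theorem orderedMonomial_mul_x₃ (he₃ : ∀ m : ℤ, ∃ r : R, ↑(e ^ m) * x₃ = r • (x₃ * ↑(e ^ m)))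
    (a b c : ℕ) (m : ℤ) :
    ∃ r : R,
      orderedMonomial x₁ x₂ x₃ e a b c m * x₃ = r • orderedMonomial x₁ x₂ x₃ e a b (c + 1) m := by
  obtain ⟨r, hr⟩ := he₃ m
  exact ⟨r, by simp only [orderedMonomial, mul_assoc, hr, mul_smul_comm, pow_succ]⟩

theorem x₃_pow_succ_mul_x₂ {d : R} (he₃ : ∀ m : ℤ, ∃ r : R, ↑(e ^ m) * x₃ = r • (x₃ * ↑(e ^ m)))
    (h₂₃ : ⁅x₂, x₃⁆ = d • ((↑e : B) ^ 2 - ↑e⁻¹ ^ 2)) (c : ℕ) :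
    ∃ p q : R, x₃ ^ (c + 1) * x₂ =
      x₂ * x₃ ^ (c + 1) + p • (x₃ ^ c * ↑(e ^ (2 : ℤ))) + q • (x₃ ^ c * ↑(e ^ (-2 : ℤ))) := by
  have h : x₃ * x₂ = x₂ * x₃ + (-d) • ↑(e ^ (2 : ℤ)) + d • ↑(e ^ (-2 : ℤ)) := by
    rw [← sub_sub_cancel (x₂ * x₃) (x₃ * x₂), ← Ring.lie_def, h₂₃, zpow_neg, zpow_ofNat,
      ← inv_pow, Units.val_pow_eq_pow_val, Units.val_pow_eq_pow_val]
    module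
  induction c with
  | zero => exact ⟨-d, d, by simpa using h⟩
  | succ c ih =>
    obtain ⟨p, q, ih⟩ := ih
    obtain ⟨rPos, hPos⟩ := he₃ 2
    obtain ⟨rNeg, hNeg⟩ := he₃ (-2)
    refine ⟨p - d * rPos ^ (c + 1), q + d * rNeg ^ (c + 1), ?_⟩
    rw [pow_succ' x₃ (c + 1), mul_assoc, ih]
    simp only [mul_add, mul_smul_comm, ← mul_assoc x₃, ← pow_succ']
    rw [h]
    simp only [add_mul, smul_mul_assoc, mul_pow_eq_smul_pow_mul hPos,
      mul_pow_eq_smul_pow_mul hNeg]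
    simp only [mul_assoc, ← pow_succ', smul_smul]
    module

theorem orderedMonomial_mul_x₂_mem {d : R}
    (he₂ : ∀ m : ℤ, ∃ r : R, ↑(e ^ m) * x₂ = r • (x₂ * ↑(e ^ m)))
    (he₃ : ∀ m : ℤ, ∃ r : R, ↑(e ^ m) * x₃ = r • (x₃ * ↑(e ^ m)))
    (h₂₃ : ⁅x₂, x₃⁆ = d • ((↑e : B) ^ 2 - ↑e⁻¹ ^ 2)) (a b c : ℕ) (m : ℤ) :
    orderedMonomial x₁ x₂ x₃ e a b c m * x₂ ∈ span R (orderedMonomials x₁ x₂ x₃ e) := by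
  obtain ⟨r, hr⟩ := he₂ m
  have hmove : orderedMonomial x₁ x₂ x₃ e a b c m * x₂ =
      r • (x₁ ^ a * x₂ ^ b * (x₃ ^ c * x₂) * ↑(e ^ m)) := by
    simp only [orderedMonomial, mul_assoc, hr, mul_smul_comm]
  rw [hmove]
  refine smul_mem _ r ?_
  cases c with
  | zero =>
    convert orderedMonomial_mem_span a (b + 1) 0 m using 1
    simp only [orderedMonomial, pow_succ, pow_zero, one_mul, mul_assoc]
  | succ c =>
    obtain ⟨p, q, hpq⟩ := x₃_pow_succ_mul_x₂ he₃ h₂₃ c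
    have hsum : x₁ ^ a * x₂ ^ b * (x₃ ^ (c + 1) * x₂) * ↑(e ^ m) =
        orderedMonomial x₁ x₂ x₃ e a (b + 1) (c + 1) m
          + p • orderedMonomial x₁ x₂ x₃ e a b c (2 + m)
          + q • orderedMonomial x₁ x₂ x₃ e a b c (-2 + m) := by
      rw [hpq]
      simp only [orderedMonomial, zpow_add, Units.val_mul, mul_add, add_mul, mul_smul_comm,
        smul_mul_assoc, pow_succ x₂ b, mul_assoc]
    rw [hsum]
    exact add_mem (add_mem (orderedMonomial_mem_span _ _ _ _)
      (smul_mem _ p (orderedMonomial_mem_span _ _ _ _)))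
      (smul_mem _ q (orderedMonomial_mem_span _ _ _ _))

theorem mul_mem_span_orderedMonomials {s t d : R} (h₁₂ : ⁅x₁, x₂⁆ = s • x₂)
    (h₁₃ : ⁅x₁, x₃⁆ = t • x₃) (h₂₃ : ⁅x₂, x₃⁆ = d • ((↑e : B) ^ 2 - ↑e⁻¹ ^ 2))
    (he₁ : Commute (↑e : B) x₁) (he₂ : ∀ m : ℤ, ∃ r : R, ↑(e ^ m) * x₂ = r • (x₂ * ↑(e ^ m)))
    (he₃ : ∀ m : ℤ, ∃ r : R, ↑(e ^ m) * x₃ = r • (x₃ * ↑(e ^ m))) {y z : B}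
    (hy : y ∈ orderedMonomials x₁ x₂ x₃ e) (hz : z ∈ ({x₁, x₂, x₃, ↑e, ↑e⁻¹} : Set B)) :
    y * z ∈ span R (orderedMonomials x₁ x₂ x₃ e) := by
  obtain ⟨a, b, c, m, rfl⟩ := hy
  rcases hz with rfl | rfl | rfl | rfl | rfl
  · rw [orderedMonomial_mul_x₁ h₁₂ h₁₃ he₁]
    exact sub_mem (orderedMonomial_mem_span _ _ _ _)
      (smul_mem _ _ (orderedMonomial_mem_span _ _ _ _))
  · exact orderedMonomial_mul_x₂_mem he₂ he₃ h₂₃ a b c m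
  · obtain ⟨r, hr⟩ := orderedMonomial_mul_x₃ he₃ a b c m
    rw [hr]
    exact smul_mem _ r (orderedMonomial_mem_span _ _ _ _)
  · have h := orderedMonomial_mul_units_zpow (x₁ := x₁) (x₂ := x₂) (x₃ := x₃) (e := e) a b c m 1
    rw [zpow_one] at h
    exact h ▸ orderedMonomial_mem_span _ _ _ _
  · have h := orderedMonomial_mul_units_zpow (x₁ := x₁) (x₂ := x₂) (x₃ := x₃) (e := e) a b c m (-1)
    rw [zpow_neg_one] at h
    exact h ▸ orderedMonomial_mem_span _ _ _ _

end OrderedMonomials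

section Falg

variable {A : Rpow}

theorem πF_eq_of_rel {u v : FreeF} (h : FRel A u v) : πF A u = πF A v :=
  RingQuot.mkAlgHom_rel Rpow h

variable (A) in
def expX₁ : (Falg A)ˣ where
  val := πF A gEp
  inv := πF A gEm
  val_inv := by rw [← map_mul, ← map_one (πF A)]; exact πF_eq_of_rel FRel.epem
  inv_val := by rw [← map_mul, ← map_one (πF A)]; exact πF_eq_of_rel FRel.emep

theorem val_expX₁ : (↑(expX₁ A) : Falg A) = πF A gEp := rfl

theorem val_inv_expX₁ : (↑(expX₁ A)⁻¹ : Falg A) = πF A gEm := rfl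

theorem πF_epow (m : ℤ) : πF A (epow m) = ↑(expX₁ A ^ m) := by
  unfold epow
  split_ifs with hm
  · lift m to ℕ using hm
    simp [expX₁]
  · obtain ⟨n, rfl⟩ : ∃ n : ℕ, m = -n := ⟨(-m).toNat, by omega⟩
    simp [expX₁]

theorem lie_x₁_x₂ : ⁅πF A gx₁, πF A gx₂⁆ = (2 * εs) • πF A gx₂ := by
  simpa only [Ring.lie_def, map_sub, map_mul, map_smul] using πF_eq_of_rel (FRel.comm12 (A := A))

theorem lie_x₁_x₃ : ⁅πF A gx₁, πF A gx₃⁆ = (-(2 * εs)) • πF A gx₃ := by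
  have h := πF_eq_of_rel (FRel.comm13 (A := A))
  simp only [map_sub, map_mul, map_smul, map_neg] at h
  exact h.trans (neg_smul (2 * εs) (πF A gx₃)).symm

theorem lie_x₂_x₃ :
    ⁅πF A gx₂, πF A gx₃⁆ = (εs * A) • ((↑(expX₁ A) : Falg A) ^ 2 - ↑(expX₁ A)⁻¹ ^ 2) := by
  simpa only [Ring.lie_def, map_sub, map_mul, map_smul, map_pow, val_expX₁, val_inv_expX₁]
    using πF_eq_of_rel (FRel.comm23 (A := A))

theorem commute_expX₁_x₁ : Commute (↑(expX₁ A) : Falg A) (πF A gx₁) := by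
  simpa only [commute_iff_eq, map_mul, val_expX₁]
    using (πF_eq_of_rel (FRel.commEp (A := A))).symm

theorem exists_expX₁_zpow_mul_x₂ (m : ℤ) :
    ∃ r : Rpow, ↑(expX₁ A ^ m) * πF A gx₂ = r • (πF A gx₂ * ↑(expX₁ A ^ m)) :=
  Units.exists_zpow_mul_eq_smul_mul_zpow
    (by simpa only [map_mul, map_smul, val_expX₁, val_inv_expX₁]
      using πF_eq_of_rel (FRel.ep2 (A := A)))
    (by simpa only [map_mul, map_smul, val_expX₁, val_inv_expX₁]
      using πF_eq_of_rel (FRel.em2 (A := A))) m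

theorem exists_expX₁_zpow_mul_x₃ (m : ℤ) :
    ∃ r : Rpow, ↑(expX₁ A ^ m) * πF A gx₃ = r • (πF A gx₃ * ↑(expX₁ A ^ m)) :=
  Units.exists_zpow_mul_eq_smul_mul_zpow
    (by simpa only [map_mul, map_smul, val_expX₁, val_inv_expX₁]
      using πF_eq_of_rel (FRel.ep3 (A := A)))
    (by simpa only [map_mul, map_smul, val_expX₁, val_inv_expX₁]
      using πF_eq_of_rel (FRel.em3 (A := A))) m

end Falg

theorem ordered_monomials_span_general (A : Rpow) :
    Submodule.span Rpow
      {y : Falg A | ∃ (n₁ n₂ n₃ : ℕ) (m : ℤ),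
        y = πF A (gx₁ ^ n₁ * gx₂ ^ n₂ * gx₃ ^ n₃ * epow m)} = ⊤ := by
  have hset : {y : Falg A | ∃ (n₁ n₂ n₃ : ℕ) (m : ℤ),
      y = πF A (gx₁ ^ n₁ * gx₂ ^ n₂ * gx₃ ^ n₃ * epow m)} =
      orderedMonomials (πF A gx₁) (πF A gx₂) (πF A gx₃) (expX₁ A) := by
    simp only [map_mul, map_pow, πF_epow]
    rfl
  rw [hset]
  refine FreeAlgebra.span_eq_top_of_mul_ι_mem (πF A) (RingQuot.mkAlgHom_surjective Rpow _) ?_ ?_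
  · exact one_mem_span_orderedMonomials
  · intro y hy i
    refine mul_mem_span_orderedMonomials lie_x₁_x₂ lie_x₁_x₃ lie_x₂_x₃ commute_expX₁_x₁
      exists_expX₁_zpow_mul_x₂ exists_expX₁_zpow_mul_x₃ hy ?_
    fin_cases i <;> simp [gx₁, gx₂, gx₃, gEp, gEm, val_expX₁, val_inv_expX₁]

/-- In `𝓕 = ℝ⟨x₁,x₂,x₃,e^{±x₁}⟩[[ε]] / I_ε`, the ordered monomials
`x₁^{n₁} x₂^{n₂} x₃^{n₃} e^{m x₁}` (`nᵢ ∈ ℕ`, `m ∈ ℤ`) span `𝓕` over `ℝ[[ε]]`. -/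
theorem ordered_monomials_span (A : Rpow) (hA : IsUnit A) :
    Submodule.span Rpow
      {y : Falg A | ∃ (n₁ n₂ n₃ : ℕ) (m : ℤ),
        y = πF A (gx₁ ^ n₁ * gx₂ ^ n₂ * gx₃ ^ n₃ * epow m)} = ⊤ :=
  ordered_monomials_span_general A

end
end

section
/- The two-sided ideal I_ε of 𝓕̃ = ℝ⟨x₁,x₂,x₃,e^{±x₁}⟩[[ε]] generated by [x₁,x₂]−2εx₂, [x₁,x₃]+2εx₃, [x₂,x₃]−2εA(ε²)sinh(2x₁), e^{±x₁}x₂−e^{±2ε}x₂e^{±x₁}, e^{±x₁}x₃−e^{∓2ε}x₃e^{±x₁}, [x₁,e^{±x₁}] is a coideal for the coproduct Δ (defined by Δx₁ = 1⊗x₁+x₁⊗1, Δx₂ = x₂⊗e^{−x₁}+e^{x₁}⊗x₂, Δx₃ = x₃⊗e^{−x₁}+e^{x₁}⊗x₃, Δe^{±x₁} = e^{±x₁}⊗e^{±x₁}): Δ(I_ε) ⊆ I_ε⊗𝓕̃ + 𝓕̃⊗I_ε. -/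
open PowerSeries

noncomputable section

open scoped TensorProduct

/-- The coproduct `Δ : 𝓕̃ → 𝓕̃ ⊗ 𝓕̃`, the unique algebra homomorphism with
`Δx₁ = 1⊗x₁ + x₁⊗1`, `Δx₂ = x₂⊗e^{−x₁} + e^{x₁}⊗x₂`, `Δx₃ = x₃⊗e^{−x₁} + e^{x₁}⊗x₃`,
`Δe^{±x₁} = e^{±x₁}⊗e^{±x₁}`. -/
def ΔF : FreeF →ₐ[Rpow] FreeF ⊗[Rpow] FreeF :=
  FreeAlgebra.lift Rpow fun i : Fin 5 =>
    match i with
    | 0 => 1 ⊗ₜ[Rpow] gx₁ + gx₁ ⊗ₜ[Rpow] 1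
    | 1 => gx₂ ⊗ₜ[Rpow] gEm + gEp ⊗ₜ[Rpow] gx₂
    | 2 => gx₃ ⊗ₜ[Rpow] gEm + gEp ⊗ₜ[Rpow] gx₃
    | 3 => gEp ⊗ₜ[Rpow] gEp
    | 4 => gEm ⊗ₜ[Rpow] gEm


/-- The generators of the two-sided ideal `I_ε` (with `A` the fixed power series, and
`sinh(2x₁) := ((e^{x₁})² − (e^{−x₁})²)/2`, so `2εA sinh(2x₁) = εA((e^{x₁})² − (e^{−x₁})²)`). -/
def IGens (A : Rpow) : Set FreeF :=
  { gx₁ * gx₂ - gx₂ * gx₁ - (2 * εs) • gx₂,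
    gx₁ * gx₃ - gx₃ * gx₁ + (2 * εs) • gx₃,
    gx₂ * gx₃ - gx₃ * gx₂ - (εs * A) • (gEp ^ 2 - gEm ^ 2),
    gEp * gx₂ - e2ε • (gx₂ * gEp),
    gEm * gx₂ - em2ε • (gx₂ * gEm),
    gEp * gx₃ - em2ε • (gx₃ * gEp),
    gEm * gx₃ - e2ε • (gx₃ * gEm),
    gx₁ * gEp - gEp * gx₁,
    gx₁ * gEm - gEm * gx₁,
    gEp * gEm - 1,
    gEm * gEp - 1 }

/-- The two-sided ideal `I_ε` generated by `IGens A`, as an `ℝ[[ε]]`-submodule of `𝓕̃`. -/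
def Iε (A : Rpow) : Submodule Rpow FreeF :=
  Submodule.span Rpow {x | ∃ a b : FreeF, ∃ r ∈ IGens A, x = a * r * b}

/-- The submodule `I_ε ⊗ 𝓕̃ + 𝓕̃ ⊗ I_ε` of `𝓕̃ ⊗ 𝓕̃`. -/
def IεTensor (A : Rpow) : Submodule Rpow (FreeF ⊗[Rpow] FreeF) :=
  Submodule.span Rpow
    ({z | ∃ u ∈ Iε A, ∃ v : FreeF, z = u ⊗ₜ[Rpow] v}
      ∪ {z | ∃ u : FreeF, ∃ v ∈ Iε A, z = u ⊗ₜ[Rpow] v})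


/-!
`Δ` is an algebra map and `I ⊗ 𝓕̃ + 𝓕̃ ⊗ I` is a two-sided ideal of `𝓕̃ ⊗ 𝓕̃` whenever `I` is one
of `𝓕̃`, so it suffices to check the generators of `I_ε`. These are built from group-like
(`e^{±x₁}`), primitive (`x₁`) and skew-primitive (`x₂`, `x₃`) elements, and the coproduct of each
one is an explicit sum of tensors with a generator in one of the two legs. For
`[x₂, x₃] - 2εA sinh(2x₁)` the `sinh` term is exactly what is needed to absorb the group-like
parts, and the mixed terms cancel modulo the `e^{±2ε}`-commutation relations.
-/

section TwoSidedSpan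

variable (R : Type*) {A B : Type*} [CommSemiring R] [Semiring A] [Algebra R A] [Semiring B]
  [Algebra R B]

def twoSidedSpan (S : Set A) : Submodule R A :=
  Submodule.span R {x | ∃ a b : A, ∃ r ∈ S, x = a * r * b}

def idealTensorSum (I : Submodule R A) : Submodule R (A ⊗[R] A) :=
  Submodule.span R ({z | ∃ u ∈ I, ∃ v : A, z = u ⊗ₜ[R] v} ∪ {z | ∃ u : A, ∃ v ∈ I, z = u ⊗ₜ[R] v})

variable {R}

theorem subset_twoSidedSpan (S : Set A) : S ⊆ twoSidedSpan R S :=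
  fun r hr => Submodule.subset_span ⟨1, 1, r, hr, by simp⟩

theorem mul_mul_mem_twoSidedSpan (S : Set A) (a b : A) {x : A} (hx : x ∈ twoSidedSpan R S) :
    a * x * b ∈ twoSidedSpan R S := by
  have : twoSidedSpan R S ≤ (twoSidedSpan R S).comap (LinearMap.mulLeftRight R (a, b)) :=
    Submodule.span_le.2 <| by
      rintro _ ⟨c, d, r, hr, rfl⟩
      exact Submodule.subset_span ⟨a * c, d * b, r, hr, by simp [mul_assoc]⟩
  simpa using this hx

theorem tmul_mem_idealTensorSum_left {I : Submodule R A} {u : A} (hu : u ∈ I) (v : A) :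
    u ⊗ₜ[R] v ∈ idealTensorSum R I :=
  Submodule.subset_span (Or.inl ⟨u, hu, v, rfl⟩)

theorem tmul_mem_idealTensorSum_right {I : Submodule R A} (u : A) {v : A} (hv : v ∈ I) :
    u ⊗ₜ[R] v ∈ idealTensorSum R I :=
  Submodule.subset_span (Or.inr ⟨u, v, hv, rfl⟩)

theorem mul_mul_mem_idealTensorSum {I : Submodule R A} (hI : ∀ a b, ∀ u ∈ I, a * u * b ∈ I)
    (z w : A ⊗[R] A) {t : A ⊗[R] A} (ht : t ∈ idealTensorSum R I) :
    z * t * w ∈ idealTensorSum R I := by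
  have hgen : ∀ g ∈ {z | ∃ u ∈ I, ∃ v : A, z = u ⊗ₜ[R] v} ∪ {z | ∃ u : A, ∃ v ∈ I, z = u ⊗ₜ[R] v},
      z * g * w ∈ idealTensorSum R I := by
    intro g hg
    induction z using TensorProduct.induction_on with
    | zero => simp
    | add z z' hz hz' => rw [add_mul, add_mul]; exact add_mem hz hz'
    | tmul a b =>
      induction w using TensorProduct.induction_on with
      | zero => simp
      | add w w' hw hw' => rw [mul_add]; exact add_mem hw hw'
      | tmul c d =>
        rcases hg with ⟨u, hu, v, rfl⟩ | ⟨u, v, hv, rfl⟩ <;>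
          simp only [Algebra.TensorProduct.tmul_mul_tmul]
        · exact tmul_mem_idealTensorSum_left (hI a c u hu) _
        · exact tmul_mem_idealTensorSum_right _ (hI b d v hv)
  have : idealTensorSum R I ≤ (idealTensorSum R I).comap (LinearMap.mulLeftRight R (z, w)) :=
    Submodule.span_le.2 fun g hg => by simpa using hgen g hg
  simpa using this ht

theorem map_mem_of_mem_twoSidedSpan {N : Submodule R B} (hN : ∀ a b, ∀ n ∈ N, a * n * b ∈ N)
    (f : A →ₐ[R] B) {S : Set A} (hS : ∀ r ∈ S, f r ∈ N) {x : A} (hx : x ∈ twoSidedSpan R S) :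
    f x ∈ N := by
  have : twoSidedSpan R S ≤ N.comap f.toLinearMap :=
    Submodule.span_le.2 <| by
      rintro _ ⟨a, b, r, hr, rfl⟩
      simpa using hN _ _ _ (hS r hr)
  exact this hx

end TwoSidedSpan

section SkewPrimitive

open TensorProduct

variable {R A : Type*} [CommRing R] [Ring A] [Algebra R A] (Δ : A →ₐ[R] A ⊗[R] A)
  {I : Submodule R A}

theorem map_mul_sub_one_mem_idealTensorSum {g h : A} (hg : Δ g = g ⊗ₜ g) (hh : Δ h = h ⊗ₜ h)
    (hgh : g * h - 1 ∈ I) : Δ (g * h - 1) ∈ idealTensorSum R I := by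
  have key : Δ (g * h - 1) = (g * h - 1) ⊗ₜ (g * h) + 1 ⊗ₜ (g * h - 1) := by
    simp [hg, hh, tmul_sub, sub_tmul, Algebra.TensorProduct.one_def]
  rw [key]
  exact add_mem (tmul_mem_idealTensorSum_left hgh _) (tmul_mem_idealTensorSum_right _ hgh)

theorem map_commutator_mem_idealTensorSum {x g : A} (hx : Δ x = 1 ⊗ₜ x + x ⊗ₜ 1)
    (hg : Δ g = g ⊗ₜ g) (hxg : x * g - g * x ∈ I) : Δ (x * g - g * x) ∈ idealTensorSum R I := by
  have key : Δ (x * g - g * x) = g ⊗ₜ (x * g - g * x) + (x * g - g * x) ⊗ₜ g := by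
    simp only [map_sub, map_mul, hx, hg, add_mul, mul_add, Algebra.TensorProduct.tmul_mul_tmul,
      one_mul, mul_one, tmul_sub, sub_tmul]
    abel
  rw [key]
  exact add_mem (tmul_mem_idealTensorSum_right _ hxg) (tmul_mem_idealTensorSum_left hxg _)

theorem map_commutator_sub_smul_mem_idealTensorSum {x y g k : A} (c : R)
    (hx : Δ x = 1 ⊗ₜ x + x ⊗ₜ 1) (hy : Δ y = y ⊗ₜ k + g ⊗ₜ y)
    (hxy : x * y - y * x - c • y ∈ I) (hxk : x * k - k * x ∈ I) (hxg : x * g - g * x ∈ I) :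
    Δ (x * y - y * x - c • y) ∈ idealTensorSum R I := by
  have key : Δ (x * y - y * x - c • y) = y ⊗ₜ (x * k - k * x) + g ⊗ₜ (x * y - y * x - c • y)
      + (x * y - y * x - c • y) ⊗ₜ k + (x * g - g * x) ⊗ₜ y := by
    simp only [map_sub, map_mul, map_smul, hx, hy, mul_add, add_mul,
      Algebra.TensorProduct.tmul_mul_tmul, one_mul, mul_one, smul_add, smul_tmul', tmul_sub,
      tmul_smul, sub_tmul]
    abel
  rw [key]
  exact add_mem (add_mem (add_mem (tmul_mem_idealTensorSum_right _ hxk)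
    (tmul_mem_idealTensorSum_right _ hxy)) (tmul_mem_idealTensorSum_left hxy _))
    (tmul_mem_idealTensorSum_left hxg _)

theorem map_commutator_add_smul_mem_idealTensorSum {x y g k : A} (c : R)
    (hx : Δ x = 1 ⊗ₜ x + x ⊗ₜ 1) (hy : Δ y = y ⊗ₜ k + g ⊗ₜ y)
    (hxy : x * y - y * x + c • y ∈ I) (hxk : x * k - k * x ∈ I) (hxg : x * g - g * x ∈ I) :
    Δ (x * y - y * x + c • y) ∈ idealTensorSum R I := by
  simpa only [neg_smul, sub_neg_eq_add] using
    map_commutator_sub_smul_mem_idealTensorSum Δ (-c) hx hy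
      (by rwa [neg_smul, sub_neg_eq_add]) hxk hxg

theorem map_mul_sub_smul_mul_mem_idealTensorSum_left {g y k : A} (q : R) (hg : Δ g = g ⊗ₜ g)
    (hy : Δ y = y ⊗ₜ k + g ⊗ₜ y) (hgy : g * y - q • (y * g) ∈ I) (hgk : g * k - 1 ∈ I)
    (hkg : k * g - 1 ∈ I) : Δ (g * y - q • (y * g)) ∈ idealTensorSum R I := by
  have key : Δ (g * y - q • (y * g)) = (g * y - q • (y * g)) ⊗ₜ 1
      + (g * g) ⊗ₜ (g * y - q • (y * g)) + (g * y) ⊗ₜ (g * k - 1)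
      - q • ((y * g) ⊗ₜ (k * g - 1)) := by
    simp only [map_sub, map_mul, map_smul, hg, hy, mul_add, add_mul,
      Algebra.TensorProduct.tmul_mul_tmul, smul_add, smul_sub, smul_tmul', tmul_sub, tmul_smul,
      sub_tmul]
    abel
  rw [key]
  exact sub_mem (add_mem (add_mem (tmul_mem_idealTensorSum_left hgy _)
    (tmul_mem_idealTensorSum_right _ hgy)) (tmul_mem_idealTensorSum_right _ hgk))
    (Submodule.smul_mem _ _ (tmul_mem_idealTensorSum_right _ hkg))

theorem map_mul_sub_smul_mul_mem_idealTensorSum_right {h y k : A} (q : R) (hk : Δ k = k ⊗ₜ k)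
    (hy : Δ y = y ⊗ₜ k + h ⊗ₜ y) (hky : k * y - q • (y * k) ∈ I) (hkh : k * h - 1 ∈ I)
    (hhk : h * k - 1 ∈ I) : Δ (k * y - q • (y * k)) ∈ idealTensorSum R I := by
  have key : Δ (k * y - q • (y * k)) = 1 ⊗ₜ (k * y - q • (y * k))
      + (k * y - q • (y * k)) ⊗ₜ (k * k) + (k * h - 1) ⊗ₜ (k * y)
      - q • ((h * k - 1) ⊗ₜ (y * k)) := by
    simp only [map_sub, map_mul, map_smul, hk, hy, mul_add, add_mul,
      Algebra.TensorProduct.tmul_mul_tmul, smul_add, smul_sub, smul_tmul', tmul_sub, tmul_smul,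
      sub_tmul]
    abel
  rw [key]
  exact sub_mem (add_mem (add_mem (tmul_mem_idealTensorSum_right _ hky)
    (tmul_mem_idealTensorSum_left hky _)) (tmul_mem_idealTensorSum_left hkh _))
    (Submodule.smul_mem _ _ (tmul_mem_idealTensorSum_left hhk _))

/-- The cross terms of `Δ (y * z - z * y)` cancel modulo the relations because `g` and `k` commute
past `y` and `z` with the same pair of scalars `p`, `q`. -/
theorem map_commutator_sub_smul_sq_mem_idealTensorSum {y z g k : A} (c p q : R)
    (hy : Δ y = y ⊗ₜ k + g ⊗ₜ y) (hz : Δ z = z ⊗ₜ k + g ⊗ₜ z) (hg : Δ g = g ⊗ₜ g)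
    (hk : Δ k = k ⊗ₜ k) (hyz : y * z - z * y - c • (g ^ 2 - k ^ 2) ∈ I)
    (hgy : g * y - p • (y * g) ∈ I) (hky : k * y - q • (y * k) ∈ I)
    (hgz : g * z - q • (z * g) ∈ I) (hkz : k * z - p • (z * k) ∈ I) :
    Δ (y * z - z * y - c • (g ^ 2 - k ^ 2)) ∈ idealTensorSum R I := by
  have key : Δ (y * z - z * y - c • (g ^ 2 - k ^ 2)) =
      (y * z - z * y - c • (g ^ 2 - k ^ 2)) ⊗ₜ (k ^ 2)
      + (g ^ 2) ⊗ₜ (y * z - z * y - c • (g ^ 2 - k ^ 2))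
      + (y * g) ⊗ₜ (k * z - p • (z * k)) - (g * y - p • (y * g)) ⊗ₜ (z * k)
      + (g * z - q • (z * g)) ⊗ₜ (y * k) - (z * g) ⊗ₜ (k * y - q • (y * k)) := by
    simp only [pow_two, smul_sub, map_sub, map_mul, map_smul, hy, hz, hg, hk, mul_add, add_mul,
      Algebra.TensorProduct.tmul_mul_tmul, smul_tmul', sub_tmul, tmul_sub, tmul_smul]
    abel
  rw [key]
  exact sub_mem (add_mem (sub_mem (add_mem (add_mem (tmul_mem_idealTensorSum_left hyz _)
    (tmul_mem_idealTensorSum_right _ hyz)) (tmul_mem_idealTensorSum_right _ hkz))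
    (tmul_mem_idealTensorSum_left hgy _)) (tmul_mem_idealTensorSum_left hgz _))
    (tmul_mem_idealTensorSum_right _ hky)

end SkewPrimitive

theorem ΔF_gx₁ : ΔF gx₁ = 1 ⊗ₜ[Rpow] gx₁ + gx₁ ⊗ₜ[Rpow] 1 := FreeAlgebra.lift_ι_apply _ _

theorem ΔF_gx₂ : ΔF gx₂ = gx₂ ⊗ₜ[Rpow] gEm + gEp ⊗ₜ[Rpow] gx₂ := FreeAlgebra.lift_ι_apply _ _

theorem ΔF_gx₃ : ΔF gx₃ = gx₃ ⊗ₜ[Rpow] gEm + gEp ⊗ₜ[Rpow] gx₃ := FreeAlgebra.lift_ι_apply _ _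

theorem ΔF_gEp : ΔF gEp = gEp ⊗ₜ[Rpow] gEp := FreeAlgebra.lift_ι_apply _ _

theorem ΔF_gEm : ΔF gEm = gEm ⊗ₜ[Rpow] gEm := FreeAlgebra.lift_ι_apply _ _

theorem ΔF_mem_IεTensor_of_mem_IGens {A : Rpow} {r : FreeF} (hr : r ∈ IGens A) :
    ΔF r ∈ IεTensor A := by
  simp only [IGens, Set.mem_insert_iff, Set.mem_singleton_iff] at hr
  rcases hr with rfl | rfl | rfl | rfl | rfl | rfl | rfl | rfl | rfl | rfl | rfl
  all_goals first
    | apply map_commutator_sub_smul_mem_idealTensorSum ΔF _ ΔF_gx₁ ΔF_gx₂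
    | apply map_commutator_add_smul_mem_idealTensorSum ΔF _ ΔF_gx₁ ΔF_gx₃
    | apply map_commutator_sub_smul_sq_mem_idealTensorSum ΔF _ e2ε em2ε ΔF_gx₂ ΔF_gx₃ ΔF_gEp ΔF_gEm
    | apply map_mul_sub_smul_mul_mem_idealTensorSum_left ΔF _ ΔF_gEp ΔF_gx₂
    | apply map_mul_sub_smul_mul_mem_idealTensorSum_left ΔF _ ΔF_gEp ΔF_gx₃
    | apply map_mul_sub_smul_mul_mem_idealTensorSum_right ΔF _ ΔF_gEm ΔF_gx₂
    | apply map_mul_sub_smul_mul_mem_idealTensorSum_right ΔF _ ΔF_gEm ΔF_gx₃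
    | apply map_commutator_mem_idealTensorSum ΔF ΔF_gx₁ ΔF_gEp
    | apply map_commutator_mem_idealTensorSum ΔF ΔF_gx₁ ΔF_gEm
    | apply map_mul_sub_one_mem_idealTensorSum ΔF ΔF_gEp ΔF_gEm
    | apply map_mul_sub_one_mem_idealTensorSum ΔF ΔF_gEm ΔF_gEp
  all_goals
    exact subset_twoSidedSpan (IGens A)
      (by simp only [IGens, Set.mem_insert_iff, Set.mem_singleton_iff, true_or, or_true])

/-- The two-sided ideal `I_ε` is a coideal for the coproduct `Δ`:
`Δ(I_ε) ⊆ I_ε ⊗ 𝓕̃ + 𝓕̃ ⊗ I_ε`. -/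
theorem Iε_is_coideal (A : Rpow) : ∀ x ∈ Iε A, ΔF x ∈ IεTensor A :=
  fun _ => map_mem_of_mem_twoSidedSpan (mul_mul_mem_idealTensorSum (mul_mul_mem_twoSidedSpan _))
    ΔF fun _ => ΔF_mem_IεTensor_of_mem_IGens

end
end

section
/- In the quotient algebra 𝓕 = 𝓕̃/I_ε, the ordered monomials x₁^{n₁}x₂^{n₂}x₃^{n₃}e^{mx₁} (n_i ∈ ℕ, m ∈ ℤ) are linearly independent over ℝ[[ε]]: their images at ε = 0 are linearly independent commutative monomials in ℝ[x₁,x₂,x₃,e^{±x₁}], hence any ℝ[[ε]]-linear relation among them must vanish. -/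
open PowerSeries

noncomputable section

/-!
`𝓕` acts on the free `ℝ[[ε]]`-module `V` with basis `δ (a, b, c, m)`, which stands for the
ordered monomial `x₂^b x₃^c x₁^a e^{m x₁}`: each generator acts as left multiplication would,
after reordering by the defining relations. Since `x₁ x₂^b x₃^c = x₂^b x₃^c (x₁ + 2ε(b - c))`,
the monomial `x₁^n x₂^b x₃^c e^{m x₁}` sends `δ (0, 0, 0, 0)` to `δ (n, b, c, m)` plus multiples
of `δ (k, b, c, m)` with `k < n`. A unitriangular family is linearly independent.
-/

theorem Finsupp.linearIndependent_of_unitriangular {ι R : Type*} [Ring R] [PartialOrder ι]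
    (v : ι → ι →₀ R) (hdiag : ∀ i, v i i = 1) (hle : ∀ i j, v i j ≠ 0 → j ≤ i) :
    LinearIndependent R v := by
  classical
  rw [linearIndependent_iff']
  by_contra! ⟨s, g, hsum, i, his, hgi⟩
  obtain ⟨j, hj⟩ := (s.filter (g · ≠ 0)).exists_maximal ⟨i, by simp [his, hgi]⟩
  obtain ⟨hjs, hgj⟩ := Finset.mem_filter.mp hj.prop
  have hcoord : ∑ k ∈ s, g k * v k j = 0 := by
    simpa [Finsupp.finsetSum_apply] using DFunLike.congr_fun hsum j
  rw [Finset.sum_eq_single_of_mem j hjs, hdiag, mul_one] at hcoord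
  · exact hgj hcoord
  · intro k hks hkj
    by_contra hk
    exact hkj (hj.eq_of_le (by simp [hks, left_ne_zero_of_mul hk])
      (hle k j (right_ne_zero_of_mul hk))).symm

namespace OrderedMonomials

lemma e2ε_mul_em2ε : e2ε * em2ε = 1 := by
  rw [e2ε, em2ε, exp_mul_exp_eq_exp_add, add_neg_cancel, PowerSeries.rescale_zero]
  simp [PowerSeries.constantCoeff_exp]

lemma e2ε_pow_mul_em2ε_pow (n : ℕ) : e2ε ^ n * em2ε ^ n = 1 := by
  rw [← mul_pow, e2ε_mul_em2ε, one_pow]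

abbrev Idx : Type := ℕ × ℕ × ℕ × ℤ

abbrev V : Type := Idx →₀ Rpow

def δ (p : Idx) : V := Finsupp.single p 1

lemma linearCombination_δ (f : Idx → V) (p : Idx) :
    Finsupp.linearCombination Rpow f (δ p) = f p := by
  simp [δ]

lemma end_ext {f g : Module.End Rpow V} (h : ∀ p, f (δ p) = g (δ p)) : f = g :=
  Finsupp.basisSingleOne.ext h

/-- `x₁ x₂^b x₃^c = x₂^b x₃^c (x₁ + x₁Shift b c)`. -/
def x₁Shift (b c : ℕ) : Rpow := 2 * εs * (((b : ℤ) - c : ℤ) : Rpow)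

lemma x₁Shift_succ_left (b c : ℕ) : x₁Shift (b + 1) c = x₁Shift b c + 2 * εs := by
  simp only [x₁Shift]; push_cast; ring

lemma x₁Shift_succ_right (b c : ℕ) : x₁Shift b (c + 1) = x₁Shift b c - 2 * εs := by
  simp only [x₁Shift]; push_cast; ring

/- The coefficients of `x₂^{b-1} x₃^c e^{±2x₁}` in `x₃ x₂^b x₃^c`, obtained by moving `x₃`
past `x₂^b` with `[x₂, x₃] = εA(e^{2x₁} - e^{-2x₁})` and then `e^{±2x₁}` past `x₂^{b-1} x₃^c`. -/
def x₃CoeffEp (A : Rpow) (b c : ℕ) : Rpow :=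
  -(εs * A * em2ε ^ (2 * c)) * ∑ k ∈ Finset.range b, e2ε ^ (2 * k)

def x₃CoeffEm (A : Rpow) (b c : ℕ) : Rpow :=
  εs * A * e2ε ^ (2 * c) * ∑ k ∈ Finset.range b, em2ε ^ (2 * k)

@[simp] lemma x₃CoeffEp_zero (A : Rpow) (c : ℕ) : x₃CoeffEp A 0 c = 0 := by simp [x₃CoeffEp]

@[simp] lemma x₃CoeffEm_zero (A : Rpow) (c : ℕ) : x₃CoeffEm A 0 c = 0 := by simp [x₃CoeffEm]

lemma x₃CoeffEp_succ (A : Rpow) (b c : ℕ) :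
    x₃CoeffEp A (b + 1) c = x₃CoeffEp A b c - εs * A * (e2ε ^ (2 * b) * em2ε ^ (2 * c)) := by
  simp only [x₃CoeffEp, Finset.sum_range_succ]; ring

lemma x₃CoeffEm_succ (A : Rpow) (b c : ℕ) :
    x₃CoeffEm A (b + 1) c = x₃CoeffEm A b c + εs * A * (em2ε ^ (2 * b) * e2ε ^ (2 * c)) := by
  simp only [x₃CoeffEm, Finset.sum_range_succ]; ring

def raiseX₁ : Module.End Rpow V := Finsupp.linearCombination Rpow fun p => δ (p.1 + 1, p.2)

def shiftX₁ : Module.End Rpow V :=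
  Finsupp.linearCombination Rpow fun p => x₁Shift p.2.1 p.2.2.1 • δ p

def actX₁ : Module.End Rpow V := raiseX₁ + shiftX₁

def actX₂ : Module.End Rpow V := Finsupp.linearCombination Rpow fun p => δ (p.1, p.2.1 + 1, p.2.2)

/- At `b = 0` the truncated `b - 1` is harmless: both coefficients vanish. -/
def actX₃ (A : Rpow) : Module.End Rpow V :=
  Finsupp.linearCombination Rpow fun p => δ (p.1, p.2.1, p.2.2.1 + 1, p.2.2.2)
    + x₃CoeffEp A p.2.1 p.2.2.1 • δ (p.1, p.2.1 - 1, p.2.2.1, p.2.2.2 + 2)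
    + x₃CoeffEm A p.2.1 p.2.2.1 • δ (p.1, p.2.1 - 1, p.2.2.1, p.2.2.2 - 2)

def actEp : Module.End Rpow V :=
  Finsupp.linearCombination Rpow fun p =>
    (e2ε ^ p.2.1 * em2ε ^ p.2.2.1) • δ (p.1, p.2.1, p.2.2.1, p.2.2.2 + 1)

def actEm : Module.End Rpow V :=
  Finsupp.linearCombination Rpow fun p =>
    (em2ε ^ p.2.1 * e2ε ^ p.2.2.1) • δ (p.1, p.2.1, p.2.2.1, p.2.2.2 - 1)

section Basis

variable (a b c : ℕ) (m : ℤ)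

lemma raiseX₁_δ : raiseX₁ (δ (a, b, c, m)) = δ (a + 1, b, c, m) := linearCombination_δ _ _

lemma shiftX₁_δ : shiftX₁ (δ (a, b, c, m)) = x₁Shift b c • δ (a, b, c, m) :=
  linearCombination_δ _ _

lemma actX₁_δ : actX₁ (δ (a, b, c, m)) = δ (a + 1, b, c, m) + x₁Shift b c • δ (a, b, c, m) := by
  rw [actX₁, LinearMap.add_apply, raiseX₁_δ, shiftX₁_δ]

lemma actX₂_δ : actX₂ (δ (a, b, c, m)) = δ (a, b + 1, c, m) := linearCombination_δ _ _

lemma actX₃_δ (A : Rpow) :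
    actX₃ A (δ (a, b, c, m)) = δ (a, b, c + 1, m)
      + x₃CoeffEp A b c • δ (a, b - 1, c, m + 2) + x₃CoeffEm A b c • δ (a, b - 1, c, m - 2) :=
  linearCombination_δ _ _

lemma actEp_δ : actEp (δ (a, b, c, m)) = (e2ε ^ b * em2ε ^ c) • δ (a, b, c, m + 1) :=
  linearCombination_δ _ _

lemma actEm_δ : actEm (δ (a, b, c, m)) = (em2ε ^ b * e2ε ^ c) • δ (a, b, c, m - 1) :=
  linearCombination_δ _ _

end Basis

section Relations

/- `module` needs the `ℕ`- and `ℤ`-algebra structures on `ℝ[[ε]]` that come from its ring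
structure; the instances found by default act coefficientwise. -/
abbrev natAlgebraRpow : Algebra ℕ Rpow := Semiring.toNatAlgebra
abbrev intAlgebraRpow : Algebra ℤ Rpow := Ring.toIntAlgebra Rpow
attribute [local instance] natAlgebraRpow intAlgebraRpow

lemma actX₁_mul_actX₂_sub : actX₁ * actX₂ - actX₂ * actX₁ = (2 * εs) • actX₂ := by
  refine end_ext fun ⟨a, b, c, m⟩ => ?_
  simp only [LinearMap.sub_apply, Module.End.mul_apply, LinearMap.smul_apply,
    actX₁_δ, actX₂_δ, map_add, map_smul, x₁Shift_succ_left]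
  module

lemma actX₁_mul_actX₃_sub (A : Rpow) :
    actX₁ * actX₃ A - actX₃ A * actX₁ = -((2 * εs) • actX₃ A) := by
  refine end_ext fun ⟨a, b, c, m⟩ => ?_
  rcases b with _ | b <;>
  simp only [LinearMap.sub_apply, Module.End.mul_apply, LinearMap.neg_apply,
    LinearMap.smul_apply, actX₁_δ, actX₃_δ, x₃CoeffEp_zero, x₃CoeffEm_zero, zero_smul, add_zero,
    map_add, map_smul, Nat.add_sub_cancel, x₁Shift_succ_right, x₁Shift_succ_left] <;>
  module

lemma commute_actX₁_actEp : Commute actX₁ actEp := by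
  refine end_ext fun ⟨a, b, c, m⟩ => ?_
  simp only [Module.End.mul_apply, actX₁_δ, actEp_δ, map_add, map_smul]
  module

lemma commute_actX₁_actEm : Commute actX₁ actEm := by
  refine end_ext fun ⟨a, b, c, m⟩ => ?_
  simp only [Module.End.mul_apply, actX₁_δ, actEm_δ, map_add, map_smul]
  module

lemma actEp_mul_actEm : actEp * actEm = 1 := by
  refine end_ext fun ⟨a, b, c, m⟩ => ?_
  simp only [Module.End.mul_apply, actEp_δ, actEm_δ, map_smul, Module.End.one_apply,
    sub_add_cancel, smul_smul]
  rw [show em2ε ^ b * e2ε ^ c * (e2ε ^ b * em2ε ^ c)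
      = (e2ε ^ b * em2ε ^ b) * (e2ε ^ c * em2ε ^ c) by ring,
    e2ε_pow_mul_em2ε_pow, e2ε_pow_mul_em2ε_pow, one_mul, one_smul]

lemma actEm_mul_actEp : actEm * actEp = 1 := by
  refine end_ext fun ⟨a, b, c, m⟩ => ?_
  simp only [Module.End.mul_apply, actEp_δ, actEm_δ, map_smul, Module.End.one_apply,
    add_sub_cancel_right, smul_smul]
  rw [show e2ε ^ b * em2ε ^ c * (em2ε ^ b * e2ε ^ c)
      = (e2ε ^ b * em2ε ^ b) * (e2ε ^ c * em2ε ^ c) by ring,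
    e2ε_pow_mul_em2ε_pow, e2ε_pow_mul_em2ε_pow, one_mul, one_smul]

lemma actEp_mul_actX₂ : actEp * actX₂ = e2ε • (actX₂ * actEp) := by
  refine end_ext fun ⟨a, b, c, m⟩ => ?_
  simp only [Module.End.mul_apply, LinearMap.smul_apply, actEp_δ, actX₂_δ, map_smul, smul_smul,
    pow_succ]
  module

lemma actEm_mul_actX₂ : actEm * actX₂ = em2ε • (actX₂ * actEm) := by
  refine end_ext fun ⟨a, b, c, m⟩ => ?_
  simp only [Module.End.mul_apply, LinearMap.smul_apply, actEm_δ, actX₂_δ, map_smul, smul_smul,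
    pow_succ]
  module

lemma actEp_mul_actX₃ (A : Rpow) : actEp * actX₃ A = em2ε • (actX₃ A * actEp) := by
  refine end_ext fun ⟨a, b, c, m⟩ => ?_
  rcases b with _ | b
  · simp only [Module.End.mul_apply, LinearMap.smul_apply, actEp_δ, actX₃_δ, x₃CoeffEp_zero,
      x₃CoeffEm_zero, zero_smul, add_zero, map_smul, smul_smul, pow_succ]
    module
  · simp only [Module.End.mul_apply, LinearMap.smul_apply, actEp_δ, actX₃_δ, map_add, map_smul,
      smul_smul, Nat.add_sub_cancel, pow_succ]
    simp only [Int.sub_eq_add_neg, Int.add_assoc, Int.reduceAdd]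
    match_scalars
    · ring
    · linear_combination (-(x₃CoeffEp A (b+1) c)) * em2ε ^ c * e2ε ^ b * e2ε_mul_em2ε
    · linear_combination (-(x₃CoeffEm A (b+1) c)) * em2ε ^ c * e2ε ^ b * e2ε_mul_em2ε

lemma actEm_mul_actX₃ (A : Rpow) : actEm * actX₃ A = e2ε • (actX₃ A * actEm) := by
  refine end_ext fun ⟨a, b, c, m⟩ => ?_
  rcases b with _ | b
  · simp only [Module.End.mul_apply, LinearMap.smul_apply, actEm_δ, actX₃_δ, x₃CoeffEp_zero,
      x₃CoeffEm_zero, zero_smul, add_zero, map_smul, smul_smul, pow_succ]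
    module
  · simp only [Module.End.mul_apply, LinearMap.smul_apply, actEm_δ, actX₃_δ, map_add, map_smul,
      smul_smul, Nat.add_sub_cancel, pow_succ]
    simp only [Int.sub_eq_add_neg, Int.add_assoc, Int.reduceAdd]
    match_scalars
    · ring
    · linear_combination (-(x₃CoeffEp A (b+1) c)) * e2ε ^ c * em2ε ^ b * e2ε_mul_em2ε
    · linear_combination (-(x₃CoeffEm A (b+1) c)) * e2ε ^ c * em2ε ^ b * e2ε_mul_em2ε

lemma actX₂_mul_actX₃_sub (A : Rpow) :
    actX₂ * actX₃ A - actX₃ A * actX₂ = (εs * A) • (actEp ^ 2 - actEm ^ 2) := by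
  refine end_ext fun ⟨a, b, c, m⟩ => ?_
  rcases b with _ | b <;>
  simp only [pow_two, LinearMap.sub_apply, Module.End.mul_apply, LinearMap.smul_apply,
    actX₂_δ, actX₃_δ, actEp_δ, actEm_δ, x₃CoeffEp_zero, x₃CoeffEm_zero, zero_smul, add_zero,
    map_add, map_smul, smul_smul, Nat.add_sub_cancel, x₃CoeffEp_succ, x₃CoeffEm_succ] <;>
  simp only [Int.sub_eq_add_neg, Int.add_assoc, Int.reduceAdd] <;>
  match_scalars <;> ring

end Relations

def freeAction (A : Rpow) : FreeF →ₐ[Rpow] Module.End Rpow V :=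
  FreeAlgebra.lift Rpow ![actX₁, actX₂, actX₃ A, actEp, actEm]

section Generators

variable (A : Rpow)

@[simp] lemma freeAction_gx₁ : freeAction A gx₁ = actX₁ := FreeAlgebra.lift_ι_apply _ _
@[simp] lemma freeAction_gx₂ : freeAction A gx₂ = actX₂ := FreeAlgebra.lift_ι_apply _ _
@[simp] lemma freeAction_gx₃ : freeAction A gx₃ = actX₃ A := FreeAlgebra.lift_ι_apply _ _
@[simp] lemma freeAction_gEp : freeAction A gEp = actEp := FreeAlgebra.lift_ι_apply _ _
@[simp] lemma freeAction_gEm : freeAction A gEm = actEm := FreeAlgebra.lift_ι_apply _ _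

end Generators

lemma freeAction_rel (A : Rpow) ⦃x y : FreeF⦄ (h : FRel A x y) :
    freeAction A x = freeAction A y := by
  cases h <;>
    simp only [map_mul, map_sub, map_smul, map_pow, map_one, map_neg, freeAction_gx₁,
      freeAction_gx₂, freeAction_gx₃, freeAction_gEp, freeAction_gEm]
  · exact actX₁_mul_actX₂_sub
  · exact actX₁_mul_actX₃_sub A
  · exact actX₂_mul_actX₃_sub A
  · exact actEp_mul_actX₂
  · exact actEm_mul_actX₂
  · exact actEp_mul_actX₃ A
  · exact actEm_mul_actX₃ A
  · exact commute_actX₁_actEp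
  · exact commute_actX₁_actEm
  · exact actEp_mul_actEm
  · exact actEm_mul_actEp

def action (A : Rpow) : Falg A →ₐ[Rpow] Module.End Rpow V :=
  RingQuot.liftAlgHom Rpow ⟨freeAction A, freeAction_rel A⟩

lemma action_πF (A : Rpow) (x : FreeF) : action A (πF A x) = freeAction A x :=
  RingQuot.liftAlgHom_mkAlgHom_apply _ _ _ _

section Powers

variable (c n : ℕ) (m : ℤ)

lemma actEp_pow_δ : (actEp ^ n) (δ (0, 0, 0, m)) = δ (0, 0, 0, m + n) := by
  induction n with
  | zero => simp
  | succ n ih =>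
    rw [pow_succ', Module.End.mul_apply, ih, actEp_δ, pow_zero, pow_zero, one_mul, one_smul]
    push_cast
    ring_nf

lemma actEm_pow_δ : (actEm ^ n) (δ (0, 0, 0, m)) = δ (0, 0, 0, m - n) := by
  induction n with
  | zero => simp
  | succ n ih =>
    rw [pow_succ', Module.End.mul_apply, ih, actEm_δ, pow_zero, pow_zero, one_mul, one_smul]
    push_cast
    ring_nf

lemma freeAction_epow_δ (A : Rpow) :
    freeAction A (epow m) (δ (0, 0, 0, 0)) = δ (0, 0, 0, m) := by
  unfold epow
  split_ifs with hm
  · simpa [hm] using actEp_pow_δ m.toNat 0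
  · simpa [le_of_lt (not_le.mp hm)] using actEm_pow_δ (-m).toNat 0

lemma actX₃_pow_δ (A : Rpow) : (actX₃ A ^ n) (δ (0, 0, c, m)) = δ (0, 0, c + n, m) := by
  induction n with
  | zero => simp
  | succ n ih =>
    rw [pow_succ', Module.End.mul_apply, ih, actX₃_δ, x₃CoeffEp_zero, x₃CoeffEm_zero, zero_smul,
      zero_smul, add_zero, add_zero, add_assoc]

lemma actX₂_pow_δ : (actX₂ ^ n) (δ (0, 0, c, m)) = δ (0, n, c, m) := by
  induction n with
  | zero => simp
  | succ n ih => rw [pow_succ', Module.End.mul_apply, ih, actX₂_δ]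

lemma commute_raiseX₁_shiftX₁ : Commute raiseX₁ shiftX₁ :=
  end_ext fun ⟨a, b, c, m⟩ => by
    simp only [Module.End.mul_apply, raiseX₁_δ, shiftX₁_δ, map_smul]

lemma raiseX₁_pow_δ (a b : ℕ) : (raiseX₁ ^ n) (δ (a, b, c, m)) = δ (a + n, b, c, m) := by
  induction n with
  | zero => simp
  | succ n ih => rw [pow_succ', Module.End.mul_apply, ih, raiseX₁_δ, add_assoc]

lemma shiftX₁_pow_δ (a b : ℕ) :
    (shiftX₁ ^ n) (δ (a, b, c, m)) = x₁Shift b c ^ n • δ (a, b, c, m) := by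
  induction n with
  | zero => simp
  | succ n ih => rw [pow_succ', Module.End.mul_apply, ih, map_smul, shiftX₁_δ, smul_smul, pow_succ]

lemma actX₁_pow_δ (b : ℕ) :
    (actX₁ ^ n) (δ (0, b, c, m)) =
      ∑ k ∈ Finset.range (n + 1),
        (n.choose k * x₁Shift b c ^ (n - k) : Rpow) • δ (k, b, c, m) := by
  rw [actX₁, commute_raiseX₁_shiftX₁.add_pow, LinearMap.coe_sum, Finset.sum_apply]
  refine Finset.sum_congr rfl fun k _ => ?_
  rw [Module.End.mul_apply, Module.End.mul_apply, Module.End.natCast_apply, map_nsmul, map_nsmul,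
    shiftX₁_pow_δ, map_smul, raiseX₁_pow_δ, zero_add, ← Nat.cast_smul_eq_nsmul Rpow, smul_smul]

end Powers

section Triangular

variable (n : ℕ) (u : ℕ × ℕ × ℤ)

lemma actX₁_pow_δ_apply_self : (actX₁ ^ n) (δ (0, u)) (n, u) = 1 := by
  obtain ⟨b, c, m⟩ := u
  rw [actX₁_pow_δ, Finsupp.finsetSum_apply, Finset.sum_eq_single_of_mem n (by simp)]
  · simp [δ]
  · intro k _ hkn
    simp [δ, hkn]

lemma le_of_actX₁_pow_δ_apply_ne_zero {q : Idx} (hq : (actX₁ ^ n) (δ (0, u)) q ≠ 0) :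
    q ≤ (n, u) := by
  obtain ⟨b, c, m⟩ := u
  rw [actX₁_pow_δ, Finsupp.finsetSum_apply] at hq
  obtain ⟨k, hk, hkq⟩ := Finset.exists_ne_zero_of_sum_ne_zero hq
  have hq : (k, b, c, m) = q := by
    by_contra hne
    simp [δ, hne] at hkq
  subst hq
  exact Prod.mk_le_mk.mpr ⟨Nat.lt_succ_iff.mp (Finset.mem_range.mp hk), le_rfl⟩

end Triangular

lemma action_monomial_δ_zero (A : Rpow) (p : Idx) :
    action A (πF A (gx₁ ^ p.1 * gx₂ ^ p.2.1 * gx₃ ^ p.2.2.1 * epow p.2.2.2)) (δ 0) =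
      (actX₁ ^ p.1) (δ (0, p.2)) := by
  obtain ⟨a, b, c, m⟩ := p
  simp only [action_πF, map_mul, map_pow, Module.End.mul_apply, freeAction_gx₁, freeAction_gx₂,
    freeAction_gx₃]
  rw [show (0 : Idx) = (0, 0, 0, 0) from rfl, freeAction_epow_δ, actX₃_pow_δ, zero_add,
    actX₂_pow_δ]

lemma linearIndependent_actX₁_pow_δ :
    LinearIndependent Rpow fun p : Idx => (actX₁ ^ p.1) (δ (0, p.2)) :=
  Finsupp.linearIndependent_of_unitriangular _ (fun p => actX₁_pow_δ_apply_self p.1 p.2)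
    fun p _ => le_of_actX₁_pow_δ_apply_ne_zero p.1 p.2

end OrderedMonomials

theorem ordered_monomials_linearIndependent_general (A : Rpow) :
    LinearIndependent Rpow
      (fun p : ℕ × ℕ × ℕ × ℤ =>
        πF A (gx₁ ^ p.1 * gx₂ ^ p.2.1 * gx₃ ^ p.2.2.1 * epow p.2.2.2)) := by
  open OrderedMonomials in
  refine .of_comp ((LinearMap.applyₗ (δ 0)).comp (action A).toLinearMap) ?_
  convert linearIndependent_actX₁_pow_δ using 1
  exact funext (action_monomial_δ_zero A)

/-- In the quotient algebra `𝓕 = 𝓕̃/I_ε`, the ordered monomials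
`x₁^{n₁} x₂^{n₂} x₃^{n₃} e^{m x₁}` (`nᵢ ∈ ℕ`, `m ∈ ℤ`) are linearly independent over
`ℝ[[ε]]` (at `ε = 0` they become distinct commutative monomials, so any `ℝ[[ε]]`-linear
relation among them vanishes). -/
theorem ordered_monomials_linearIndependent (A : Rpow) (hA : IsUnit A) :
    LinearIndependent Rpow
      (fun p : ℕ × ℕ × ℕ × ℤ =>
        πF A (gx₁ ^ p.1 * gx₂ ^ p.2.1 * gx₃ ^ p.2.2.1 * epow p.2.2.2)) :=
  ordered_monomials_linearIndependent_general A

end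
end
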